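/- arXiv:1912.10709 — 2 statements merged into one kernel-verified Lean document; each statement's English description precedes it below -/
import Mathlib

section
/- Let Z ~ N((μ₁, μ₂)ᵀ, Σ) be a bivariate normal random vector with Var(Z₁) = σ₁² > 0, Var(Z₂) = σ₂² > 0, Cov(Z₁, Z₂) = ρσ₁σ₂ and σ₁² + σ₂² − 2ρσ₁σ₂ > 0. Then MRL(χ(Z)) = 2·[Φ(|μ₁ − μ₂|/√(σ₁² + σ₂² − 2ρσ₁σ₂)) − 0.5], where Φ is the standard normal cumulative distribution function, and if μ₁ ≠ μ₂ then MD(χ(Z)) = sign(μ₁ − μ₂)·(√2/2, −√2/2)ᵀ. -/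
open MeasureTheory ProbabilityTheory Matrix

noncomputable section

def euclNorm {n : ℕ} (x : Fin n → ℝ) : ℝ := Real.sqrt (∑ i, x i ^ 2)

def centerMat (n : ℕ) : Matrix (Fin n) (Fin n) ℝ :=
  1 - (n : ℝ)⁻¹ • Matrix.of (fun _ _ => (1 : ℝ))

def chi {n : ℕ} (z : Fin n → ℝ) : Fin n → ℝ :=
  (euclNorm ((centerMat n).mulVec z))⁻¹ • (centerMat n).mulVec z

def meanVec {Ω : Type*} [MeasurableSpace Ω] (P : Measure Ω) {n : ℕ}
    (X : Ω → Fin n → ℝ) : Fin n → ℝ := fun i => ∫ ω, X ω i ∂P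

def covMatrix {Ω : Type*} [MeasurableSpace Ω] (P : Measure Ω) {n : ℕ}
    (X : Ω → Fin n → ℝ) : Matrix (Fin n) (Fin n) ℝ :=
  Matrix.of fun i j => ∫ ω, (X ω i - meanVec P X i) * (X ω j - meanVec P X j) ∂P

def MRL {Ω : Type*} [MeasurableSpace Ω] (P : Measure Ω) {n : ℕ}
    (X : Ω → Fin n → ℝ) : ℝ := euclNorm (meanVec P X)

def MD {Ω : Type*} [MeasurableSpace Ω] (P : Measure Ω) {n : ℕ}
    (X : Ω → Fin n → ℝ) : Fin n → ℝ := (euclNorm (meanVec P X))⁻¹ • meanVec P X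

def stdGaussianPi (n : ℕ) : Measure (Fin n → ℝ) :=
  Measure.pi fun _ => gaussianReal 0 1

def IsGaussianVec {Ω : Type*} [MeasurableSpace Ω] (P : Measure Ω) {n : ℕ}
    (Z : Ω → Fin n → ℝ) (m : Fin n → ℝ) (S : Matrix (Fin n) (Fin n) ℝ) : Prop :=
  ∃ A : Matrix (Fin n) (Fin n) ℝ, A * Aᵀ = S ∧
    Measure.map Z P = Measure.map (fun x => m + A.mulVec x) (stdGaussianPi n)

def ascFact (a : ℝ) (k : ℕ) : ℝ := ∏ i ∈ Finset.range k, (a + i)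

def kummerM (a b z : ℝ) : ℝ := ∑' k : ℕ, (ascFact a k / ascFact b k) * z ^ k / (Nat.factorial k)

def varrho (m : ℕ) (x : ℝ) : ℝ :=
  (Real.Gamma (((m : ℝ) + 1) / 2) / (Real.sqrt 2 * Real.Gamma (((m : ℝ) + 2) / 2))) * x *
    kummerM (1 / 2) (((m : ℝ) + 2) / 2) (-x ^ 2 / 2)

def fFun (m : ℕ) (x : ℝ) : ℝ :=
  1 - (((m : ℝ) - 1) / m) * kummerM 1 ((m : ℝ) / 2 + 1) (-x ^ 2 / 2) - (varrho m x) ^ 2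

def gFun (m : ℕ) (x : ℝ) : ℝ :=
  (1 / (m : ℝ)) * kummerM 1 ((m : ℝ) / 2 + 1) (-x ^ 2 / 2)

def Vmat (n : ℕ) : Matrix (Fin n) (Fin n) ℝ :=
  Matrix.of fun i j =>
    if (j : ℕ) = n - 1 then 1 / Real.sqrt n
    else if (i : ℕ) = (j : ℕ) then
      ((n : ℝ) - 1 - (j : ℕ)) / Real.sqrt (((n : ℝ) - 1 - (j : ℕ)) * ((n : ℝ) - (j : ℕ)))
    else if (j : ℕ) < (i : ℕ) then
      -(1 / Real.sqrt (((n : ℝ) - 1 - (j : ℕ)) * ((n : ℝ) - (j : ℕ))))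
    else 0

def projMat (n : ℕ) : Matrix (Fin n) (Fin n) ℝ :=
  Matrix.diagonal fun i => if (i : ℕ) < n - 1 then 1 else 0

def embedZero {n : ℕ} (v : Fin (n - 1) → ℝ) : Fin n → ℝ :=
  fun i => if h : (i : ℕ) < n - 1 then v ⟨i, h⟩ else 0

def Ximat (n : ℕ) (r : ℝ) : Matrix (Fin n) (Fin n) ℝ :=
  Matrix.of fun i j => if i = j then 1 else r

def stdNormCDF (x : ℝ) : ℝ := (gaussianReal 0 1 (Set.Iic x)).toReal

def thetaTilde : Fin 2 → ℝ := ![Real.sqrt 2 / 2, -(Real.sqrt 2 / 2)]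


section Aux
open Real
open scoped NNReal ENNReal

lemma gauss_pdf_conv (v₁ v₂ : ℝ≥0) (hv₁ : v₁ ≠ 0) (hv₂ : v₂ ≠ 0) (y : ℝ) :
    ∫ x : ℝ, gaussianPDFReal 0 v₁ x * gaussianPDFReal x v₂ y
      = gaussianPDFReal 0 (v₁ + v₂) y := by
  set a : ℝ := (v₁ : ℝ) with ha_def
  set b : ℝ := (v₂ : ℝ) with hb_def
  have ha : 0 < a := by exact_mod_cast pos_iff_ne_zero.mpr hv₁
  have hb : 0 < b := by exact_mod_cast pos_iff_ne_zero.mpr hv₂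
  have hab : 0 < a + b := by linarith
  set c : ℝ := (a + b) / (2 * a * b) with hc_def
  have hc : 0 < c := by positivity
  set m : ℝ := a * y / (a + b) with hm_def
  set K : ℝ := (√(2 * π * a))⁻¹ * (√(2 * π * b))⁻¹ * rexp (-y ^ 2 / (2 * (a + b))) with hK_def
  have hπ : (0:ℝ) < π := Real.pi_pos
  have hfun : ∀ x : ℝ, gaussianPDFReal 0 v₁ x * gaussianPDFReal x v₂ y
      = K * rexp (-c * (x - m) ^ 2) := by
    intro x
    simp only [gaussianPDFReal, hK_def, ← ha_def, ← hb_def, sub_zero]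
    rw [mul_mul_mul_comm]
    rw [mul_assoc ((√(2 * π * a))⁻¹ * (√(2 * π * b))⁻¹), ← Real.exp_add, ← Real.exp_add]
    congr 2
    rw [hc_def, hm_def]
    have h2 : a ≠ 0 := ha.ne'
    have h3 : b ≠ 0 := hb.ne'
    have h4 : a + b ≠ 0 := hab.ne'
    field_simp
    ring
  simp_rw [hfun]
  rw [MeasureTheory.integral_const_mul]
  have : ∫ x : ℝ, rexp (-c * (x - m) ^ 2) = ∫ x : ℝ, rexp (-c * x ^ 2) :=
    integral_sub_right_eq_self (μ := volume) (fun x => rexp (-c * x ^ 2)) m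
  rw [this, integral_gaussian]
  simp only [gaussianPDFReal, sub_zero, hK_def]
  have h1 : (√(2 * π * a))⁻¹ * (√(2 * π * b))⁻¹ * √(π / c) = (√(2 * π * (a + b)))⁻¹ := by
    rw [← Real.sqrt_inv, ← Real.sqrt_inv, ← Real.sqrt_mul (by positivity),
      ← Real.sqrt_mul (by positivity), ← Real.sqrt_inv]
    congr 1
    rw [hc_def]
    field_simp
  have hcast : ((v₁ + v₂ : ℝ≥0) : ℝ) = a + b := by push_cast; ring
  rw [hcast]
  rw [mul_right_comm, h1]

lemma measurable_pdf2 (v : ℝ≥0) : Measurable (fun p : ℝ × ℝ => gaussianPDF p.1 v p.2) := by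
  unfold gaussianPDF gaussianPDFReal
  fun_prop

lemma integrable_pdf_mul (v₁ v₂ : ℝ≥0) (y : ℝ) :
    Integrable (fun x : ℝ => gaussianPDFReal 0 v₁ x * gaussianPDFReal x v₂ y) := by
  have hmg : Measurable (fun x : ℝ => gaussianPDFReal x v₂ y) := by
    unfold gaussianPDFReal; fun_prop
  have h := Integrable.bdd_mul (c := (√(2 * π * v₂))⁻¹) (integrable_gaussianPDFReal 0 v₁)
    hmg.aestronglyMeasurable ?_
  · simpa [mul_comm] using h
  · refine ae_of_all _ (fun x => ?_)
    rw [Real.norm_eq_abs, abs_of_nonneg (gaussianPDFReal_nonneg _ _ _)]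
    unfold gaussianPDFReal
    have : rexp (-(y - x) ^ 2 / (2 * v₂)) ≤ 1 := by
      apply Real.exp_le_one_iff.mpr
      apply div_nonpos_of_nonpos_of_nonneg (neg_nonpos.mpr (sq_nonneg _)) (by positivity)
    calc (√(2 * π * v₂))⁻¹ * rexp (-(y - x) ^ 2 / (2 * v₂))
        ≤ (√(2 * π * v₂))⁻¹ * 1 := by
          apply mul_le_mul_of_nonneg_left this (by positivity)
      _ = (√(2 * π * v₂))⁻¹ := mul_one _

lemma gauss_conv (v₁ v₂ : ℝ≥0) :
    Measure.map (fun p : ℝ × ℝ => p.1 + p.2)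
      ((gaussianReal 0 v₁).prod (gaussianReal 0 v₂)) = gaussianReal 0 (v₁ + v₂) := by
  by_cases hv₁ : v₁ = 0
  · subst hv₁
    rw [zero_add, gaussianReal_zero_var, Measure.dirac_prod,
      Measure.map_map measurable_add measurable_prodMk_left]
    simp [Function.comp_def]
  by_cases hv₂ : v₂ = 0
  · subst hv₂
    rw [add_zero, gaussianReal_zero_var, Measure.prod_dirac,
      Measure.map_map measurable_add measurable_prodMk_right]
    simp [Function.comp_def]
  have hv : v₁ + v₂ ≠ 0 := fun h => hv₁ (by simpa using (add_eq_zero.mp h).1)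
  ext s hs
  rw [Measure.map_apply measurable_add hs, gaussianReal_apply _ hv s,
    Measure.prod_apply (measurable_add hs)]
  have hmap : ∀ x : ℝ, (gaussianReal 0 v₂) (Prod.mk x ⁻¹' ((fun p : ℝ × ℝ => p.1 + p.2) ⁻¹' s))
      = ∫⁻ y in s, gaussianPDF x v₂ y := by
    intro x
    have : (Prod.mk x ⁻¹' ((fun p : ℝ × ℝ => p.1 + p.2) ⁻¹' s)) = (fun y => x + y) ⁻¹' s := rfl
    rw [this, ← Measure.map_apply (measurable_const_add x) hs,
      gaussianReal_map_const_add, zero_add, gaussianReal_apply _ hv₂]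
  simp_rw [hmap]
  rw [gaussianReal_of_var_ne_zero _ hv₁]
  have hG : Measurable (fun x : ℝ => ∫⁻ y in s, gaussianPDF x v₂ y) :=
    Measurable.lintegral_prod_right (measurable_pdf2 v₂)
  rw [lintegral_withDensity_eq_lintegral_mul _ (measurable_gaussianPDF _ _) hG]
  simp only [Pi.mul_apply]
  have hswap : ∫⁻ x, gaussianPDF 0 v₁ x * ∫⁻ y in s, gaussianPDF x v₂ y
      = ∫⁻ y in s, ∫⁻ x, gaussianPDF 0 v₁ x * gaussianPDF x v₂ y := by
    rw [← lintegral_lintegral_swap]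
    · congr 1; ext x
      exact (lintegral_const_mul' _ _ ENNReal.ofReal_ne_top).symm
    · exact (((measurable_gaussianPDF 0 v₁).comp measurable_fst).mul
        (measurable_pdf2 v₂)).aemeasurable
  rw [hswap]
  refine setLIntegral_congr_fun hs (fun y _ => ?_)
  have : ∀ x : ℝ, gaussianPDF 0 v₁ x * gaussianPDF x v₂ y
      = ENNReal.ofReal (gaussianPDFReal 0 v₁ x * gaussianPDFReal x v₂ y) := by
    intro x
    rw [gaussianPDF, gaussianPDF, ← ENNReal.ofReal_mul (gaussianPDFReal_nonneg _ _ _)]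
  simp_rw [this]
  rw [← ofReal_integral_eq_lintegral_ofReal (integrable_pdf_mul v₁ v₂ y)
    (ae_of_all _ fun x => mul_nonneg (gaussianPDFReal_nonneg _ _ _) (gaussianPDFReal_nonneg _ _ _)),
    gauss_pdf_conv v₁ v₂ hv₁ hv₂ y, gaussianPDF]

lemma gauss_map_mul (w : ℝ) :
    (gaussianReal 0 1).map (fun y => w * y) = gaussianReal 0 ⟨w ^ 2, sq_nonneg w⟩ := by
  have := gaussianReal_map_const_mul (μ := 0) (v := 1) w
  simp at this
  exact this

lemma map_lin (w0 w1 : ℝ) :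
    Measure.map (fun x : Fin 2 → ℝ => w0 * x 0 + w1 * x 1) (stdGaussianPi 2)
      = gaussianReal 0 (⟨w0 ^ 2, sq_nonneg w0⟩ + ⟨w1 ^ 2, sq_nonneg w1⟩) := by
  unfold stdGaussianPi
  have hmp := measurePreserving_piFinTwo (fun _ : Fin 2 => gaussianReal 0 1)
  have h1 : (fun x : Fin 2 → ℝ => w0 * x 0 + w1 * x 1)
      = (fun p : ℝ × ℝ => w0 * p.1 + w1 * p.2) ∘ (MeasurableEquiv.piFinTwo (fun _ => ℝ)) := rfl
  rw [h1, ← Measure.map_map (by fun_prop) (MeasurableEquiv.measurable _),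
    hmp.map_eq]
  have h2 : (fun p : ℝ × ℝ => w0 * p.1 + w1 * p.2)
      = (fun p : ℝ × ℝ => p.1 + p.2) ∘ (Prod.map (fun y => w0 * y) (fun y => w1 * y)) := rfl
  rw [h2, ← Measure.map_map measurable_add (by fun_prop),
    ← Measure.map_prod_map _ _ (by fun_prop) (by fun_prop),
    gauss_map_mul, gauss_map_mul]
  exact gauss_conv _ _

lemma gauss_singleton (v : ℝ≥0) (hv : v ≠ 0) (t : ℝ) : gaussianReal 0 v {t} = 0 :=
  gaussianReal_absolutelyContinuous 0 hv (Real.volume_singleton)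

lemma stdNormCDF_neg (x : ℝ) : stdNormCDF (-x) = 1 - stdNormCDF x := by
  have hmap : (gaussianReal 0 1).map (fun y => (-1 : ℝ) * y) = gaussianReal 0 1 := by
    have := gaussianReal_map_const_mul (μ := 0) (v := 1) (-1 : ℝ)
    simpa using this
  have h1 : gaussianReal 0 1 (Set.Iic (-x)) = gaussianReal 0 1 (Set.Ici x) := by
    conv_lhs => rw [← hmap]
    rw [Measure.map_apply (by fun_prop) measurableSet_Iic]
    congr 1
    ext y
    simp [neg_le]
  have h2 : gaussianReal 0 1 (Set.Ici x) = gaussianReal 0 1 (Set.Ioi x) + gaussianReal 0 1 {x} := by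
    rw [← measure_union (by simp [Set.disjoint_left]; intro a ha hax; exact absurd hax ha.ne') (measurableSet_singleton x)]
    congr 1
    ext y
    simp only [Set.mem_Ici, Set.mem_union, Set.mem_Ioi, Set.mem_singleton_iff]
    constructor
    · intro h; rcases lt_or_eq_of_le h with h | h
      · exact Or.inl h
      · exact Or.inr h.symm
    · rintro (h | rfl) <;> [exact h.le; exact le_rfl]
  have h3 : gaussianReal 0 1 (Set.Ioi x) = 1 - gaussianReal 0 1 (Set.Iic x) := by
    rw [← Set.compl_Iic, measure_compl measurableSet_Iic (measure_ne_top _ _), measure_univ]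
  unfold stdNormCDF
  rw [h1, h2, h3, gauss_singleton 1 one_ne_zero, add_zero,
    ENNReal.toReal_sub_of_le prob_le_one ENNReal.one_ne_top, ENNReal.toReal_one]

lemma stdNormCDF_zero : stdNormCDF 0 = 1 / 2 := by
  have := stdNormCDF_neg 0
  rw [neg_zero] at this
  linarith

lemma stdNormCDF_mono : Monotone stdNormCDF := by
  intro a b hab
  unfold stdNormCDF
  exact ENNReal.toReal_mono (measure_ne_top _ _) (measure_mono (Set.Iic_subset_Iic.mpr hab))

lemma stdNormCDF_half_lt {x : ℝ} (hx : 0 < x) : 1 / 2 < stdNormCDF x := by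
  rw [← stdNormCDF_zero]
  unfold stdNormCDF
  have hsplit : gaussianReal 0 1 (Set.Iic x) =
      gaussianReal 0 1 (Set.Iic 0) + gaussianReal 0 1 (Set.Ioc 0 x) := by
    rw [← measure_union (by simp [Set.disjoint_left]; intro y h1 h2; linarith) measurableSet_Ioc,
      Set.Iic_union_Ioc_eq_Iic hx.le]
  have hpos : gaussianReal 0 1 (Set.Ioc 0 x) ≠ 0 := by
    intro h
    have := gaussianReal_absolutelyContinuous' 0 one_ne_zero h
    rw [Real.volume_Ioc] at this
    simp only [ENNReal.ofReal_eq_zero, sub_zero] at this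
    linarith
  rw [hsplit, ENNReal.toReal_add (measure_ne_top _ _) (measure_ne_top _ _)]
  have : 0 < (gaussianReal 0 1 (Set.Ioc 0 x)).toReal :=
    ENNReal.toReal_pos hpos (measure_ne_top _ _)
  linarith

lemma gauss_Iic (v : ℝ≥0) (hv : v ≠ 0) (t : ℝ) :
    (gaussianReal 0 v (Set.Iic t)).toReal = stdNormCDF (t / Real.sqrt v) := by
  have hvpos : (0:ℝ) < (v:ℝ) := by exact_mod_cast pos_iff_ne_zero.mpr hv
  have hs : (0:ℝ) < Real.sqrt v := Real.sqrt_pos.mpr hvpos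
  have hmap : (gaussianReal 0 1).map (fun y => Real.sqrt v * y) = gaussianReal 0 v := by
    have := gaussianReal_map_const_mul (μ := 0) (v := 1) (Real.sqrt v)
    simp only [mul_zero, mul_one] at this
    rw [this]
    congr 1
    ext
    simp [Real.sq_sqrt hvpos.le]
  rw [← hmap, Measure.map_apply (by fun_prop) measurableSet_Iic]
  unfold stdNormCDF
  congr 2
  ext y
  simp only [Set.mem_preimage, Set.mem_Iic]
  rw [← le_div_iff₀' hs]

lemma sign_integral (v : ℝ≥0) (hv : v ≠ 0) (δ : ℝ) :
    ∫ y, Real.sign (δ + y) ∂(gaussianReal 0 v)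
      = 2 * stdNormCDF (δ / Real.sqrt v) - 1 := by
  have hfun : ∀ y : ℝ, Real.sign (δ + y)
      = (Set.Ioi (-δ)).indicator (1 : ℝ → ℝ) y - (Set.Iio (-δ)).indicator (1 : ℝ → ℝ) y := by
    intro y
    rcases lt_trichotomy y (-δ) with h | h | h
    · rw [Real.sign_of_neg (by linarith), Set.indicator_of_notMem (by simp; linarith),
        Set.indicator_of_mem (Set.mem_Iio.mpr h)]
      norm_num
    · subst h
      rw [show δ + -δ = 0 by ring, Real.sign_zero,
        Set.indicator_of_notMem (by simp), Set.indicator_of_notMem (by simp)]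
      norm_num
    · rw [Real.sign_of_pos (by linarith), Set.indicator_of_mem (Set.mem_Ioi.mpr h),
        Set.indicator_of_notMem (by simp; linarith)]
      norm_num
  simp_rw [hfun]
  have hA : Integrable ((Set.Ioi (-δ)).indicator (1 : ℝ → ℝ)) (gaussianReal 0 v) :=
    (integrable_const (1:ℝ)).indicator measurableSet_Ioi
  have hB : Integrable ((Set.Iio (-δ)).indicator (1 : ℝ → ℝ)) (gaussianReal 0 v) :=
    (integrable_const (1:ℝ)).indicator measurableSet_Iio
  rw [integral_sub hA hB,
    integral_indicator_one measurableSet_Ioi, integral_indicator_one measurableSet_Iio]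
  have hIoi : gaussianReal 0 v (Set.Ioi (-δ)) = 1 - gaussianReal 0 v (Set.Iic (-δ)) := by
    rw [← Set.compl_Iic, measure_compl measurableSet_Iic (measure_ne_top _ _), measure_univ]
  have hIio : (gaussianReal 0 v (Set.Iio (-δ))).toReal = (gaussianReal 0 v (Set.Iic (-δ))).toReal := by
    rw [show Set.Iic (-δ) = Set.Iio (-δ) ∪ {-δ} by
      ext y; simp only [Set.mem_Iic, Set.mem_union, Set.mem_Iio, Set.mem_singleton_iff]
      exact ⟨fun h => lt_or_eq_of_le h, fun h => by rcases h with h | rfl; exacts [h.le, le_rfl]⟩,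
      measure_union (by simp) (measurableSet_singleton _), gauss_singleton v hv, add_zero]
  rw [measureReal_def, measureReal_def, hIoi, hIio, ENNReal.toReal_sub_of_le prob_le_one ENNReal.one_ne_top, ENNReal.toReal_one,
    gauss_Iic v hv, show (-δ) / Real.sqrt v = -(δ / Real.sqrt v) by ring, stdNormCDF_neg]
  ring

lemma centerMat_mulVec (z : Fin 2 → ℝ) :
    (centerMat 2).mulVec z = ![(z 0 - z 1) / 2, -((z 0 - z 1) / 2)] := by
  funext i
  fin_cases i <;>
    simp [centerMat, Matrix.mulVec, dotProduct, Fin.sum_univ_two, Matrix.sub_apply,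
      Matrix.one_apply] <;> ring

lemma euclNorm_center (z : Fin 2 → ℝ) :
    euclNorm ((centerMat 2).mulVec z) = |z 0 - z 1| / Real.sqrt 2 := by
  rw [centerMat_mulVec]
  unfold euclNorm
  rw [Fin.sum_univ_two]
  simp only [Matrix.cons_val_zero, Matrix.cons_val_one, Matrix.head_cons]
  rw [show ((z 0 - z 1) / 2) ^ 2 + (-((z 0 - z 1) / 2)) ^ 2 = (z 0 - z 1) ^ 2 / 2 by ring,
    Real.sqrt_div (sq_nonneg _), Real.sqrt_sq_eq_abs]

lemma chi_eq (z : Fin 2 → ℝ) : chi z = Real.sign (z 0 - z 1) • thetaTilde := by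
  unfold chi
  rw [euclNorm_center, centerMat_mulVec]
  set d := z 0 - z 1 with hd
  have h2 : (0:ℝ) < Real.sqrt 2 := Real.sqrt_pos.mpr (by norm_num)
  have hsq : Real.sqrt 2 * Real.sqrt 2 = 2 := Real.mul_self_sqrt (by norm_num)
  funext i
  fin_cases i <;>
    simp only [Pi.smul_apply, smul_eq_mul, Matrix.cons_val_zero, Matrix.cons_val_one,
      Matrix.head_cons, thetaTilde, Fin.zero_eta, Fin.mk_one] <;>
  · rcases lt_trichotomy d 0 with h | h | h
    · have hd0 : d ≠ 0 := ne_of_lt h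
      rw [Real.sign_of_neg h, abs_of_neg h]
      field_simp
      try nlinarith [hsq]
    · rw [h, Real.sign_zero]
      norm_num
    · have hd0 : d ≠ 0 := ne_of_gt h
      rw [Real.sign_of_pos h, abs_of_pos h]
      field_simp
      try nlinarith [hsq]


lemma measurable_realSign : Measurable Real.sign := by
  unfold Real.sign
  exact Measurable.ite (measurableSet_lt measurable_id measurable_const) measurable_const
    (Measurable.ite (measurableSet_lt measurable_const measurable_id) measurable_const
      measurable_const)


end Aux

/-- bivariate normal case: MRL and MD of `χ(Z)`. -/
theorem stmt2 {Ω : Type*} [MeasurableSpace Ω] (P : Measure Ω) [IsProbabilityMeasure P]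
    (Z : Ω → Fin 2 → ℝ) (μ₁ μ₂ σ₁ σ₂ ρ : ℝ) (hσ₁ : 0 < σ₁) (hσ₂ : 0 < σ₂)
    (hpos : 0 < σ₁ ^ 2 + σ₂ ^ 2 - 2 * ρ * σ₁ * σ₂)
    (hgauss : IsGaussianVec P Z ![μ₁, μ₂]
      !![σ₁ ^ 2, ρ * σ₁ * σ₂; ρ * σ₁ * σ₂, σ₂ ^ 2]) :
    MRL P (fun ω => chi (Z ω)) =
      2 * (stdNormCDF (|μ₁ - μ₂| / Real.sqrt (σ₁ ^ 2 + σ₂ ^ 2 - 2 * ρ * σ₁ * σ₂)) - 0.5) ∧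
    (μ₁ ≠ μ₂ →
      MD P (fun ω => chi (Z ω)) = Real.sign (μ₁ - μ₂) • thetaTilde) := by
  obtain ⟨A, hAS, hmap⟩ := hgauss
  haveI : IsProbabilityMeasure (stdGaussianPi 2) := by
    unfold stdGaussianPi; infer_instance
  set δ : ℝ := μ₁ - μ₂ with hδdef
  set s : ℝ := σ₁ ^ 2 + σ₂ ^ 2 - 2 * ρ * σ₁ * σ₂ with hsdef
  set w0 : ℝ := A 0 0 - A 1 0 with hw0
  set w1 : ℝ := A 0 1 - A 1 1 with hw1
  have hw : w0 ^ 2 + w1 ^ 2 = s := by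
    have h00 : (A * Aᵀ) 0 0 = σ₁ ^ 2 := by rw [hAS]; simp
    have h11 : (A * Aᵀ) 1 1 = σ₂ ^ 2 := by rw [hAS]; simp
    have h01 : (A * Aᵀ) 0 1 = ρ * σ₁ * σ₂ := by rw [hAS]; simp
    simp only [Matrix.mul_apply, Fin.sum_univ_two, Matrix.transpose_apply] at h00 h11 h01
    rw [hw0, hw1, hsdef]
    linear_combination h00 + h11 - 2 * h01
  set V : NNReal := ⟨w0 ^ 2, sq_nonneg w0⟩ + ⟨w1 ^ 2, sq_nonneg w1⟩ with hVdef
  have hV : (V : ℝ) = s := by rw [hVdef]; push_cast; exact hw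
  have hVne : V ≠ 0 := by
    intro h
    rw [h] at hV
    simp at hV
    exact (ne_of_lt hpos) hV
  have hsqrtV : Real.sqrt V = Real.sqrt s := by rw [hV]
  have hT : Measurable (fun x : Fin 2 → ℝ => ![μ₁, μ₂] + A.mulVec x) := by
    have hmv : Measurable (fun x : Fin 2 → ℝ => A.mulVec x) := by
      refine measurable_pi_lambda _ fun i => ?_
      have : (fun x : Fin 2 → ℝ => A.mulVec x i) = fun x => A i 0 * x 0 + A i 1 * x 1 := by
        funext x; simp [Matrix.mulVec, dotProduct, Fin.sum_univ_two]
      rw [this]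
      exact Measurable.add (f := fun x : Fin 2 → ℝ => A i 0 * x 0)
        (g := fun x : Fin 2 → ℝ => A i 1 * x 1)
        (by fun_prop)
        (by fun_prop)
    exact Measurable.add measurable_const hmv
  have hZae : AEMeasurable Z P := by
    by_contra h
    rw [Measure.map_of_not_aemeasurable h] at hmap
    have h1 : (Measure.map (fun x => ![μ₁, μ₂] + A.mulVec x) (stdGaussianPi 2)) Set.univ = 1 := by
      rw [Measure.map_apply hT MeasurableSet.univ]
      simp
    rw [← hmap] at h1
    simp at h1
  set S : ℝ := ∫ ω, Real.sign (Z ω 0 - Z ω 1) ∂P with hSdef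
  have hmean : meanVec P (fun ω => chi (Z ω)) = S • thetaTilde := by
    funext i
    unfold meanVec
    simp_rw [chi_eq, Pi.smul_apply, smul_eq_mul]
    rw [MeasureTheory.integral_mul_const]
  have hf : Measurable (fun z : Fin 2 → ℝ => Real.sign (z 0 - z 1)) :=
    measurable_realSign.comp ((measurable_pi_apply 0).sub (measurable_pi_apply 1))
  have hS : S = 2 * stdNormCDF (δ / Real.sqrt s) - 1 := by
    have step1 : S = ∫ z, Real.sign (z 0 - z 1) ∂(Measure.map Z P) :=
      (integral_map hZae hf.aestronglyMeasurable).symm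
    rw [step1, hmap, integral_map hT.aemeasurable hf.aestronglyMeasurable]
    have step2 : ∀ x : Fin 2 → ℝ,
        Real.sign ((![μ₁, μ₂] + A.mulVec x) 0 - (![μ₁, μ₂] + A.mulVec x) 1)
          = Real.sign (δ + (w0 * x 0 + w1 * x 1)) := by
      intro x
      congr 1
      simp only [Pi.add_apply, Matrix.cons_val_zero, Matrix.cons_val_one, Matrix.head_cons,
        Matrix.mulVec, dotProduct, Fin.sum_univ_two]
      rw [hδdef, hw0, hw1]
      ring
    simp_rw [step2]
    have hL : Measurable (fun x : Fin 2 → ℝ => w0 * x 0 + w1 * x 1) :=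
      by fun_prop
    have hg : Measurable (fun y : ℝ => Real.sign (δ + y)) :=
      measurable_realSign.comp (measurable_const.add measurable_id)
    rw [← integral_map hL.aemeasurable hg.aestronglyMeasurable, map_lin, ← hVdef,
      sign_integral V hVne δ, hsqrtV]
  have hnormS : euclNorm (S • thetaTilde) = |S| := by
    unfold euclNorm thetaTilde
    rw [Fin.sum_univ_two]
    simp only [Pi.smul_apply, smul_eq_mul, Matrix.cons_val_zero, Matrix.cons_val_one,
      Matrix.head_cons]
    rw [show (S * (Real.sqrt 2 / 2)) ^ 2 + (S * -(Real.sqrt 2 / 2)) ^ 2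
        = S ^ 2 * ((Real.sqrt 2 * Real.sqrt 2) / 2) by ring,
      Real.mul_self_sqrt (by norm_num)]
    rw [show S ^ 2 * (2 / 2) = S ^ 2 by ring]
    exact Real.sqrt_sq_eq_abs S
  have hsqrt_pos : 0 < Real.sqrt s := Real.sqrt_pos.mpr hpos
  constructor
  · unfold MRL
    rw [hmean, hnormS, hS]
    have habs : |2 * stdNormCDF (δ / Real.sqrt s) - 1|
        = 2 * stdNormCDF (|δ| / Real.sqrt s) - 1 := by
      rcases le_or_gt 0 δ with h | h
      · rw [abs_of_nonneg h]
        have h1 : stdNormCDF 0 ≤ stdNormCDF (δ / Real.sqrt s) :=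
          stdNormCDF_mono (div_nonneg h hsqrt_pos.le)
        rw [stdNormCDF_zero] at h1
        rw [abs_of_nonneg (by linarith)]
      · rw [abs_of_neg h, neg_div, stdNormCDF_neg]
        have h1 : stdNormCDF 0 ≤ stdNormCDF (-δ / Real.sqrt s) :=
          stdNormCDF_mono (div_nonneg (by linarith) hsqrt_pos.le)
        rw [stdNormCDF_zero] at h1
        rw [neg_div, stdNormCDF_neg] at h1
        rw [abs_of_nonpos (by linarith)]
        ring
    rw [habs]
    norm_num
    ring
  · intro hne
    have hδ : δ ≠ 0 := sub_ne_zero.mpr hne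
    unfold MD
    rw [hmean, hnormS]
    set c : ℝ := 2 * stdNormCDF (|δ| / Real.sqrt s) - 1 with hc
    have hcpos : 0 < c := by
      have := stdNormCDF_half_lt (div_pos (abs_pos.mpr hδ) hsqrt_pos)
      rw [hc]; linarith
    have hSc : S = Real.sign δ * c := by
      rcases hδ.lt_or_gt with h | h
      · rw [hS, Real.sign_of_neg h, hc, abs_of_neg h, neg_div, stdNormCDF_neg]
        ring
      · rw [hS, Real.sign_of_pos h, hc, abs_of_pos h]
        ring
    have habs2 : |S| = c := by
      rcases hδ.lt_or_gt with h | h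
      · rw [hSc, Real.sign_of_neg h]
        rw [abs_of_nonpos (by nlinarith)]
        ring
      · rw [hSc, Real.sign_of_pos h]
        rw [abs_of_nonneg (by nlinarith)]
        ring
    rw [habs2, hSc, smul_smul]
    congr 1
    rw [mul_comm (Real.sign δ) c, ← mul_assoc, inv_mul_cancel₀ hcpos.ne', one_mul]
end
end

section
/- Let n ≥ 2, σ > 0, ρ ∈ (−1/n, 1), and let Z ~ N(μ, σ²Ξ) be an n-dimensional Gaussian random vector, where Ξ is the n×n matrix with diagonal entries 1 and all off-diagonal entries ρ, and suppose Pμ ≠ 0. Then there exists an n×n orthogonal matrix O such that OᵀPZ is Gaussian with mean (‖Pμ‖, 0, …, 0)ᵀ and covariance matrix blockdiag((1−ρ)σ²·I_{n−1}, 0). -/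
open MeasureTheory ProbabilityTheory Matrix

noncomputable section

section AuxStmt16

lemma measurable_mulVec_aux {n m : ℕ} (M : Matrix (Fin n) (Fin m) ℝ) :
    Measurable (fun x : Fin m → ℝ => M.mulVec x) := by
  apply measurable_pi_lambda
  intro i
  simp only [Matrix.mulVec, dotProduct]
  exact Finset.measurable_sum _ fun k _ => (measurable_pi_apply k).const_mul _

lemma centerMat_mulVec_apply {n : ℕ} (x : Fin n → ℝ) (i : Fin n) :
    (centerMat n).mulVec x i = x i - (n : ℝ)⁻¹ * ∑ j, x j := by
  simp [centerMat, Matrix.mulVec, dotProduct, sub_mul, Finset.sum_sub_distrib,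
    Matrix.one_apply, ite_mul, Finset.mul_sum]

lemma sum_centerMat_mulVec {n : ℕ} (hn : (n : ℝ) ≠ 0) (x : Fin n → ℝ) :
    ∑ i, (centerMat n).mulVec x i = 0 := by
  simp only [centerMat_mulVec_apply, Finset.sum_sub_distrib, Finset.sum_const,
    Finset.card_univ, Fintype.card_fin, nsmul_eq_mul]
  field_simp
  ring

lemma centerMat_transpose (n : ℕ) : (centerMat n)ᵀ = centerMat n := by
  ext i j
  simp [centerMat, Matrix.one_apply, eq_comm]

lemma centerMat_mul_J (n : ℕ) (hn : (n : ℝ) ≠ 0) :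
    centerMat n * Matrix.of (fun _ _ => (1 : ℝ)) = 0 := by
  ext i j
  simp [centerMat, Matrix.mul_apply, Matrix.sub_apply, Matrix.one_apply, sub_mul,
    Finset.sum_sub_distrib, Finset.sum_ite_eq, Finset.card_univ]
  field_simp
  ring

lemma Ximat_decomp (n : ℕ) (r : ℝ) :
    Ximat n r = (1 - r) • (1 : Matrix (Fin n) (Fin n) ℝ)
      + r • Matrix.of (fun _ _ => (1 : ℝ)) := by
  ext i j
  by_cases h : i = j <;> simp [Ximat, Matrix.one_apply, h]

lemma J_mul_centerMat (n : ℕ) (hn : (n : ℝ) ≠ 0) :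
    Matrix.of (fun _ _ => (1 : ℝ)) * centerMat n = 0 := by
  have h1 : (Matrix.of (fun _ _ => (1 : ℝ)) : Matrix (Fin n) (Fin n) ℝ)ᵀ
      = Matrix.of (fun _ _ => (1 : ℝ)) := by ext i j; simp
  have := congrArg Matrix.transpose (centerMat_mul_J n hn)
  rwa [Matrix.transpose_mul, centerMat_transpose, h1, Matrix.transpose_zero] at this

lemma centerMat_mul_self (n : ℕ) (hn : (n : ℝ) ≠ 0) :
    centerMat n * centerMat n = centerMat n := by
  have h : centerMat n * centerMat n
      = centerMat n * 1 - centerMat n * ((n : ℝ)⁻¹ • Matrix.of (fun _ _ => (1 : ℝ))) := by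
    rw [← Matrix.mul_sub]; rfl
  rw [h, Matrix.mul_one, Matrix.mul_smul, centerMat_mul_J n hn]
  simp

lemma centerMat_Ximat_centerMat (n : ℕ) (hn : (n : ℝ) ≠ 0) (r : ℝ) :
    centerMat n * Ximat n r * centerMat n = (1 - r) • centerMat n := by
  rw [Ximat_decomp, Matrix.mul_add, Matrix.mul_smul, Matrix.mul_one, Matrix.mul_smul,
    centerMat_mul_J n hn, Matrix.add_mul, Matrix.smul_mul, Matrix.smul_mul,
    centerMat_mul_self n hn]
  simp

lemma exists_good_basis (n : ℕ) (hn : 2 ≤ n) (v : Fin n → ℝ) (hv : v ≠ 0)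
    (hsum : ∑ i, v i = 0) :
    ∃ b : Fin n → Fin n → ℝ,
      (∀ j k, ∑ i, b j i * b k i = if j = k then 1 else 0) ∧
      (∀ i, b ⟨0, lt_of_lt_of_le two_pos hn⟩ i = (Real.sqrt (∑ j, v j ^ 2))⁻¹ * v i) ∧
      (∀ i, b ⟨n-1, by omega⟩ i = (Real.sqrt n)⁻¹) := by
  set vE : EuclideanSpace ℝ (Fin n) := WithLp.toLp 2 v with hvdef
  have hvE : vE ≠ 0 := by
    intro h; apply hv; simpa [hvdef] using congrArg WithLp.ofLp h
  have hnR : (0:ℝ) < n := by positivity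
  have hsn : Real.sqrt n ≠ 0 := by positivity
  set i0 : Fin n := ⟨0, by omega⟩ with hi0
  set il : Fin n := ⟨n - 1, by omega⟩ with hil
  have hne : i0 ≠ il := by simp [hi0, hil, Fin.ext_iff]; omega
  set u : EuclideanSpace ℝ (Fin n) := ‖vE‖⁻¹ • vE with hu
  set w : EuclideanSpace ℝ (Fin n) := WithLp.toLp 2 (fun _ => (Real.sqrt n)⁻¹) with hw
  have hr : (0:ℝ) < ‖vE‖ := norm_pos_iff.mpr hvE
  have huu : inner ℝ u u = 1 := by
    rw [hu, real_inner_smul_left, real_inner_smul_right, real_inner_self_eq_norm_sq]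
    field_simp
  have hww : inner ℝ w w = 1 := by
    rw [PiLp.inner_apply]
    simp only [RCLike.inner_apply, starRingEnd_apply, star_trivial]
    rw [hw]
    simp only [Finset.sum_const, Finset.card_univ, Fintype.card_fin, nsmul_eq_mul]
    field_simp
    rw [Real.sq_sqrt hnR.le]
  have hvw : inner ℝ vE w = 0 := by
    rw [PiLp.inner_apply]
    simp only [RCLike.inner_apply, starRingEnd_apply, star_trivial, hw]
    rw [← Finset.mul_sum, show ∑ x, vE.ofLp x = 0 from hsum, mul_zero]
  have huw : inner ℝ u w = 0 := by
    rw [hu, real_inner_smul_left, hvw, mul_zero]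
  set f : Fin n → EuclideanSpace ℝ (Fin n) := fun i => if i = i0 then u else w with hf
  have hon : Orthonormal ℝ (Set.restrict {i0, il} f) := by
    rw [orthonormal_iff_ite]
    rintro ⟨i, hi⟩ ⟨j, hj⟩
    simp only [Set.restrict, Set.domRestrict_apply, Subtype.mk.injEq, hf]
    rcases hi with rfl | rfl <;> rcases hj with rfl | rfl
    · simpa using huu
    · simp [hne, hne.symm, huw]
    · simp [hne, hne.symm, real_inner_comm u w ▸ huw]
    · simpa [hne.symm] using hww
  obtain ⟨b, hb⟩ := hon.exists_orthonormalBasis_extension_of_card_eq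
    (by simp [finrank_euclideanSpace])
  have hnorm : ‖vE‖ = Real.sqrt (∑ j, vE j ^ 2) := by
    simp [EuclideanSpace.norm_eq, Real.norm_eq_abs, sq_abs]
  refine ⟨fun j i => b j i, ?_, ?_, ?_⟩
  · intro j k
    have := (orthonormal_iff_ite.mp b.orthonormal) j k
    rw [PiLp.inner_apply] at this
    simpa [RCLike.inner_apply, starRingEnd_apply, star_trivial, mul_comm] using this
  · intro i
    have h1 := hb i0 (by simp)
    have h2 : b i0 i = u i := by rw [h1]; simp [hf]
    show b i0 i = _
    rw [h2, hu, ← hnorm]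
    rfl
  · intro i
    have h1 := hb il (by simp)
    have h2 : b il i = w i := by rw [h1]; simp [hf, hne.symm]
    show b il i = _
    rw [h2, hw]

end AuxStmt16

/-- existence of an orthogonal `O` with
`OᵀPZ ~ N((‖Pμ‖,0,…,0)ᵀ, blockdiag((1−ρ)σ²I_{n−1}, 0))`. -/
theorem stmt16 {Ω : Type*} [MeasurableSpace Ω] (P : Measure Ω) [IsProbabilityMeasure P]
    {n : ℕ} (hn : 2 ≤ n) (σ ρ : ℝ) (hσ : 0 < σ)
    (hρ₁ : -(1 / (n : ℝ)) < ρ) (hρ₂ : ρ < 1)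
    (μ : Fin n → ℝ) (Z : Ω → Fin n → ℝ)
    (hgauss : IsGaussianVec P Z μ (σ ^ 2 • Ximat n ρ))
    (hPμ : (centerMat n).mulVec μ ≠ 0) :
    ∃ O : Matrix (Fin n) (Fin n) ℝ, Oᵀ * O = 1 ∧
      IsGaussianVec P (fun ω => Oᵀ.mulVec ((centerMat n).mulVec (Z ω)))
        (fun i => if i = (⟨0, by omega⟩ : Fin n)
          then euclNorm ((centerMat n).mulVec μ) else 0)
        (Matrix.diagonal fun i =>
          if (i : ℕ) < n - 1 then (1 - ρ) * σ ^ 2 else 0) := by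
  classical
  obtain ⟨A, hA, hmap⟩ := hgauss
  have hn0 : (n : ℝ) ≠ 0 := by positivity
  have hnpos : (0:ℝ) < n := by positivity
  have hsn : Real.sqrt n ≠ 0 := by positivity
  have hsn2 : Real.sqrt n * Real.sqrt n = (n : ℝ) := Real.mul_self_sqrt (le_of_lt hnpos)
  set C : Matrix (Fin n) (Fin n) ℝ := centerMat n with hCdef
  set v : Fin n → ℝ := C.mulVec μ with hvdef
  have hv : v ≠ 0 := hPμ
  have hvsum : ∑ i, v i = 0 := sum_centerMat_mulVec hn0 μ
  set i0 : Fin n := ⟨0, by omega⟩ with hi0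
  set il : Fin n := ⟨n - 1, by omega⟩ with hil
  obtain ⟨b, hortho, hb0, hbl⟩ := exists_good_basis n hn v hv hvsum
  set r : ℝ := Real.sqrt (∑ j, v j ^ 2) with hrdef
  have hrpos : 0 < r := by
    rw [hrdef]
    apply Real.sqrt_pos.mpr
    obtain ⟨j, hj⟩ := Function.ne_iff.mp hv
    exact Finset.sum_pos' (fun _ _ => sq_nonneg _)
      ⟨j, Finset.mem_univ j, lt_of_le_of_ne (sq_nonneg _) (Ne.symm (pow_ne_zero 2 hj))⟩
  set O : Matrix (Fin n) (Fin n) ℝ := Matrix.of (fun i j => b j i) with hOdef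
  have hOO : Oᵀ * O = 1 := by
    ext j k
    simpa [hOdef, Matrix.mul_apply, Matrix.one_apply] using hortho j k
  -- column sums of b
  have hSum : ∀ j, ∑ i, b j i = (if j = il then 1 else 0) * Real.sqrt n := by
    intro j
    have h := hortho j il
    simp only [hil, hbl] at h
    rwa [← Finset.sum_mul, ← div_eq_mul_inv, div_eq_iff hsn] at h
  -- mean identity
  have hmean : ∀ i, ∑ k, b i k * v k = if i = i0 then r else 0 := by
    intro i
    have h := hortho i i0
    simp only [hi0, hb0] at h
    have h2 : ∑ k, b i k * ((Real.sqrt (∑ j, v j ^ 2))⁻¹ * v k)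
        = r⁻¹ * ∑ k, b i k * v k := by
      rw [Finset.mul_sum]
      exact Finset.sum_congr rfl fun k _ => by rw [← hrdef]; ring
    rw [h2] at h
    have := congrArg (fun t => r * t) h
    simpa [mul_ite, ← mul_assoc, mul_inv_cancel₀ (ne_of_gt hrpos)] using this
  -- key diagonal identity
  have hOJO : Oᵀ * Matrix.of (fun _ _ => (1:ℝ)) * O
      = Matrix.of (fun j k => (∑ i, b j i) * (∑ i, b k i)) := by
    ext j k
    simp only [Matrix.mul_apply, Matrix.of_apply, Matrix.transpose_apply, hOdef, mul_one]
    rw [← Finset.mul_sum]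
  have hjlt : ∀ j : Fin n, ((j:ℕ) < n - 1) ↔ j ≠ il := by
    intro j
    have := j.isLt
    simp only [hil, Ne, Fin.ext_iff]
    omega
  have hOCO : Oᵀ * C * O
      = Matrix.diagonal (fun i : Fin n => if (i:ℕ) < n - 1 then (1:ℝ) else 0) := by
    have hexp : Oᵀ * C * O = Oᵀ * O
        - (n:ℝ)⁻¹ • (Oᵀ * Matrix.of (fun _ _ => (1:ℝ)) * O) := by
      have hC : C = 1 - (n : ℝ)⁻¹ • Matrix.of (fun _ _ => (1:ℝ)) := rfl
      rw [hC, Matrix.mul_sub, Matrix.mul_one, Matrix.mul_smul, Matrix.sub_mul,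
        Matrix.smul_mul]
    rw [hexp, hOO, hOJO]
    ext j k
    simp only [Matrix.sub_apply, Matrix.smul_apply, Matrix.of_apply, Matrix.one_apply,
      Matrix.diagonal_apply, smul_eq_mul, hSum]
    by_cases hjk : j = k
    · subst hjk
      by_cases hjl : j = il
      · have hlt : ¬ ((j:ℕ) < n - 1) := by rw [hjlt]; simpa using hjl
        simp [hjl, hlt, hsn2, hil]
        field_simp
        ring
      · have : (j:ℕ) < n - 1 := (hjlt j).mpr hjl
        simp [hjl, this]
    · have h1 : ¬ (j = il ∧ k = il) := by
        rintro ⟨rfl, rfl⟩; exact hjk rfl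
      rcases not_and_or.mp h1 with h | h <;> simp [hjk, h, Ne.symm hjk]
  -- the covariance matrix of the transformed vector
  set A' : Matrix (Fin n) (Fin n) ℝ := Oᵀ * C * A with hA'def
  have hCt : Cᵀ = C := centerMat_transpose n
  have hcov : A' * A'ᵀ
      = Matrix.diagonal (fun i : Fin n => if (i:ℕ) < n - 1 then (1 - ρ) * σ ^ 2 else 0) := by
    have h1 : A' * A'ᵀ = Oᵀ * (C * ((A * Aᵀ) * (C * O))) := by
      rw [hA'def, Matrix.transpose_mul, Matrix.transpose_mul, Matrix.transpose_transpose,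
        hCt]
      simp only [Matrix.mul_assoc]
    rw [h1, hA]
    have h2 : C * (σ ^ 2 • Ximat n ρ * (C * O)) = ((1 - ρ) * σ ^ 2) • (C * O) := by
      have h3 : C * (Ximat n ρ * C) = (1 - ρ) • C := by
        rw [← Matrix.mul_assoc]; exact centerMat_Ximat_centerMat n hn0 ρ
      calc C * (σ ^ 2 • Ximat n ρ * (C * O))
          = σ ^ 2 • (C * (Ximat n ρ * C) * O) := by
            rw [Matrix.smul_mul, Matrix.mul_smul]
            congr 1
            simp only [Matrix.mul_assoc]
        _ = ((1 - ρ) * σ ^ 2) • (C * O) := by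
            rw [h3, Matrix.smul_mul, smul_smul, mul_comm (σ^2)]
    rw [h2]
    rw [Matrix.mul_smul, ← Matrix.mul_assoc, hOCO]
    ext i j
    simp only [Matrix.smul_apply, Matrix.diagonal_apply, smul_eq_mul]
    by_cases hij : i = j
    · subst hij; by_cases h : (i:ℕ) < n - 1 <;> simp [h]
    · simp [hij]
  -- measure-theoretic part
  have hmeasA : Measurable (fun x : Fin n → ℝ => μ + A.mulVec x) :=
    (measurable_mulVec_aux A).const_add μ
  have hmeasL : Measurable (fun x : Fin n → ℝ => (Oᵀ * C).mulVec x) :=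
    measurable_mulVec_aux (Oᵀ * C)
  have hprob : IsProbabilityMeasure (stdGaussianPi n) := by
    unfold stdGaussianPi; infer_instance
  have hZae : AEMeasurable Z P := by
    by_contra h
    rw [Measure.map_of_not_aemeasurable h] at hmap
    have hp : IsProbabilityMeasure
        (Measure.map (fun x => μ + A.mulVec x) (stdGaussianPi n)) :=
      Measure.isProbabilityMeasure_map hmeasA.aemeasurable
    have h1 := hp.measure_univ
    rw [← hmap] at h1
    simp at h1
  have hμm : (Oᵀ * C).mulVec μ
      = fun i => if i = i0 then euclNorm v else 0 := by
    funext i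
    have h1 : (Oᵀ * C).mulVec μ i = ∑ k, b i k * v k := by
      rw [← Matrix.mulVec_mulVec]
      simp only [Matrix.mulVec, dotProduct, hOdef, Matrix.of_apply,
        Matrix.transpose_apply]
      exact Finset.sum_congr rfl fun k _ => rfl
    rw [h1, hmean i]
    rfl
  refine ⟨O, hOO, A', hcov, ?_⟩
  have hfun : (fun ω => Oᵀ.mulVec ((centerMat n).mulVec (Z ω)))
      = (fun x : Fin n → ℝ => (Oᵀ * C).mulVec x) ∘ Z := by
    funext ω
    simp [Function.comp, Matrix.mulVec_mulVec, ← hCdef]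
  rw [hfun, ← AEMeasurable.map_map_of_aemeasurable hmeasL.aemeasurable hZae, hmap,
    Measure.map_map hmeasL hmeasA]
  congr 1
  funext x
  simp only [Function.comp_apply]
  rw [Matrix.mulVec_add, Matrix.mulVec_mulVec, hμm]
end
end
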